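/- arXiv:1805.07686 — 2 statements merged into one kernel-verified Lean document; each statement's English description precedes it below -/
import Mathlib

section
/- With ρ_{≤x} = λ·∫₀^x t·f(t) dt and ρ = λ·m < 1, the following busy-period integral identity holds: ∫₀^∞ (λ·x·f(x))/(1 − ρ_{≤x}) dx = ln(1/(1−ρ)). Equivalently, the expectation E[S/(1−ρ_{≤S})] = ∫₀^∞ (x·f(x))/(1−ρ_{≤x}) dx equals (1/λ)·ln(1/(1−ρ)). (This is the key change-of-variables computation in the paper's proof that the expected relevant busy period started by 2kS work grows only logarithmically in 1/(1−ρ).) -/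
/-!
Put `h t = λ t f(t)` and `F x = ∫₀ˣ h`, so that `F = ρ_{≤·}` increases from `0` to `ρ < 1`.
Since `v ↦ -log (1 - v)` is Lipschitz on `(-∞, ρ]`, the function `-log (1 - F)` is absolutely
continuous, and by Lebesgue's differentiation theorem its derivative is `h / (1 - F)` almost
everywhere. The fundamental theorem of calculus for absolutely continuous functions then gives
`∫₀ᵇ h / (1 - F) = -log (1 - F b)`, and letting `b → ∞` gives `-log (1 - ρ)`.
-/

open MeasureTheory

/-- Relevant load `ρ_{≤x} = λ ∫₀^x t f(t) dt`. -/
noncomputable def rhoLe (f : ℝ → ℝ) (lam x : ℝ) : ℝ :=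
  lam * ∫ t in (0:ℝ)..x, t * f t

open Set Filter Topology
open scoped NNReal

theorem LipschitzOnWith.comp_absolutelyContinuousOnInterval {X Y : Type*} [PseudoMetricSpace X]
    [PseudoMetricSpace Y] {g : Y → X} {f : ℝ → Y} {K : ℝ≥0} {t : Set Y} {a b : ℝ}
    (hg : LipschitzOnWith K g t) (hft : MapsTo f (uIcc a b) t)
    (hf : AbsolutelyContinuousOnInterval f a b) :
    AbsolutelyContinuousOnInterval (g ∘ f) a b := by
  have hK := Tendsto.const_mul (K : ℝ) hf
  rw [mul_zero] at hK
  refine squeeze_zero' (Eventually.of_forall fun _ ↦ Finset.sum_nonneg fun _ _ ↦ dist_nonneg) ?_ hK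
  filter_upwards [mem_inf_of_right (mem_principal_self _)] with E hE
  rw [Finset.mul_sum]
  exact Finset.sum_le_sum fun i hi ↦ hg.dist_le_mul _ (hft (hE.1 i hi).1) _ (hft (hE.1 i hi).2)

namespace Real

theorem hasDerivAt_neg_log_one_sub {u : ℝ} (hu : u ≠ 1) :
    HasDerivAt (fun v ↦ -log (1 - v)) (1 - u)⁻¹ u := by
  have := (((hasDerivAt_id' u).const_sub 1).log (sub_ne_zero.2 hu.symm)).fun_neg
  rwa [neg_div, neg_neg, one_div] at this

theorem lipschitzOnWith_neg_log_one_sub {r : ℝ} (hr : r < 1) :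
    LipschitzOnWith (1 - r)⁻¹.toNNReal (fun v ↦ -log (1 - v)) (Iic r) := by
  refine (convex_Iic r).lipschitzOnWith_of_nnnorm_hasDerivWithin_le
    (fun u hu ↦ (hasDerivAt_neg_log_one_sub (by linarith [mem_Iic.1 hu])).hasDerivWithinAt)
    fun u hu ↦ ?_
  have hu : u ≤ r := hu
  rw [← NNReal.coe_le_coe, coe_nnnorm, norm_of_nonneg (inv_nonneg.2 (by linarith)),
    coe_toNNReal _ (inv_nonneg.2 (by linarith))]
  exact inv_anti₀ (by linarith) (by linarith)

end Real

namespace intervalIntegral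

theorem integral_div_one_sub_primitive {h : ℝ → ℝ} {a b r : ℝ}
    (hh : IntervalIntegrable h volume a b) (hr : r < 1)
    (hF : ∀ x ∈ uIcc a b, ∫ t in a..x, h t ≤ r) :
    ∫ x in a..b, h x / (1 - ∫ t in a..x, h t) = -Real.log (1 - ∫ t in a..b, h t) := by
  have hG := (Real.lipschitzOnWith_neg_log_one_sub hr).comp_absolutelyContinuousOnInterval hF
    (hh.absolutelyContinuousOnInterval_intervalIntegral left_mem_uIcc)
  have hFTC := hG.integral_deriv_eq_sub
  simp only [Function.comp_apply, integral_same, sub_zero, Real.log_one, neg_zero] at hFTC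
  rw [← hFTC]
  refine integral_congr_ae ?_
  filter_upwards [hh.ae_hasDerivAt_integral] with x hx hxI
  have hxI' := uIoc_subset_uIcc hxI
  have := (Real.hasDerivAt_neg_log_one_sub (by linarith [hF x hxI'])).comp x
    (hx hxI' a left_mem_uIcc)
  rw [this.deriv, div_eq_inv_mul]

end intervalIntegral

section NonnegOnIoi

variable {h : ℝ → ℝ} {a : ℝ} (hh : IntegrableOn h (Ioi a)) (hh_nonneg : ∀ t ∈ Ioi a, 0 ≤ h t)
include hh hh_nonneg

theorem intervalIntegral_le_integral_Ioi {x : ℝ} (hx : a ≤ x) :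
    ∫ t in a..x, h t ≤ ∫ t in Ioi a, h t := by
  rw [intervalIntegral.integral_of_le hx]
  exact setIntegral_mono_set hh ((ae_restrict_iff' measurableSet_Ioi).2 (.of_forall hh_nonneg))
    Ioc_subset_Ioi_self.eventuallyLE

theorem monotoneOn_intervalIntegral_Ici : MonotoneOn (fun x ↦ ∫ t in a..x, h t) (Ici a) :=
  fun _ hx _ _ hxy ↦ intervalIntegral.integral_mono_interval le_rfl hx hxy
    ((ae_restrict_iff' measurableSet_Ioc).2 (.of_forall fun t ht ↦ hh_nonneg t ht.1))
    ((intervalIntegrable_iff_integrableOn_Ioc_of_le (hx.trans hxy)).2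
      (hh.mono_set Ioc_subset_Ioi_self))

theorem integral_Ioi_div_one_sub_primitive (hρ : ∫ t in Ioi a, h t < 1) :
    ∫ x in Ioi a, h x / (1 - ∫ t in a..x, h t) = -Real.log (1 - ∫ t in Ioi a, h t) := by
  set ρ := ∫ t in Ioi a, h t
  set F := fun x ↦ ∫ t in a..x, h t
  have hF_le (x : ℝ) (hx : a ≤ x) : F x ≤ ρ := intervalIntegral_le_integral_Ioi hh hh_nonneg hx
  have hF_meas : AEMeasurable F (volume.restrict (Ioi a)) :=
    aemeasurable_restrict_of_monotoneOn measurableSet_Ioi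
      ((monotoneOn_intervalIntegral_Ici hh hh_nonneg).mono Ioi_subset_Ici_self)
  have hint : IntegrableOn (fun x ↦ h x / (1 - F x)) (Ioi a) := by
    refine (hh.div_const (1 - ρ)).mono'
      (hh.aemeasurable.div (aemeasurable_const.sub hF_meas)).aestronglyMeasurable ?_
    filter_upwards [self_mem_ae_restrict measurableSet_Ioi] with x hx
    rw [norm_div, Real.norm_of_nonneg (hh_nonneg x hx),
      Real.norm_of_nonneg (by linarith [hF_le x hx.le])]
    exact div_le_div_of_nonneg_left (hh_nonneg x hx) (by linarith) (by linarith [hF_le x hx.le])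
  have hF_lim : Tendsto F atTop (𝓝 ρ) := intervalIntegral_tendsto_integral_Ioi a hh tendsto_id
  have hlog : Tendsto (fun x ↦ -Real.log (1 - F x)) atTop (𝓝 (-Real.log (1 - ρ))) :=
    (tendsto_const_nhds.sub hF_lim).log (by linarith) |>.neg
  refine tendsto_nhds_unique (intervalIntegral_tendsto_integral_Ioi a hint tendsto_id)
    (hlog.congr' ?_)
  filter_upwards [eventually_ge_atTop a] with b hb
  refine (intervalIntegral.integral_div_one_sub_primitive ?_ hρ fun x hx ↦ hF_le x ?_).symm
  · exact (intervalIntegrable_iff_integrableOn_Ioc_of_le hb).2 (hh.mono_set Ioc_subset_Ioi_self)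
  · exact (uIcc_of_le hb ▸ hx).1

end NonnegOnIoi

theorem busy_period_log_identity_general
    (f : ℝ → ℝ) (m : ℝ)
    (hf_nonneg : ∀ x, 0 ≤ f x)
    (hm_int : Integrable (fun t => t * f t) (volume.restrict (Set.Ioi 0)))
    (hm_def : m = ∫ t in Set.Ioi (0:ℝ), t * f t)
    (lam : ℝ) (hlam : lam ∈ Set.Ioo 0 (1/m)) :
    (∫ x in Set.Ioi (0:ℝ), (lam * x * f x) / (1 - rhoLe f lam x)
        = Real.log (1 / (1 - lam * m)))
    ∧ (∫ x in Set.Ioi (0:ℝ), (x * f x) / (1 - rhoLe f lam x)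
        = (1 / lam) * Real.log (1 / (1 - lam * m))) := by
  obtain ⟨hlam_pos, hlam_lt⟩ := hlam
  have hm_pos : 0 < m := one_div_pos.1 (hlam_pos.trans hlam_lt)
  have hρ : lam * m < 1 := by rw [lt_div_iff₀ hm_pos] at hlam_lt; linarith
  have hload : ∫ t in Ioi 0, lam * (t * f t) = lam * m := by rw [integral_const_mul, hm_def]
  have key : ∫ x in Ioi 0, lam * x * f x / (1 - rhoLe f lam x) = -Real.log (1 - lam * m) := by
    have := integral_Ioi_div_one_sub_primitive (hm_int.const_mul lam)
      (fun t ht ↦ mul_nonneg hlam_pos.le (mul_nonneg (le_of_lt ht) (hf_nonneg t))) (hload ▸ hρ)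
    simpa only [rhoLe, hload, intervalIntegral.integral_const_mul, mul_assoc] using this
  have hlog : Real.log (1 / (1 - lam * m)) = -Real.log (1 - lam * m) := by
    rw [one_div, Real.log_inv]
  refine ⟨hlog ▸ key, ?_⟩
  rw [hlog, ← key, ← integral_const_mul]
  refine setIntegral_congr_fun measurableSet_Ioi fun x _ ↦ ?_
  field_simp

/-- **Busy-period integral identity.**
With `ρ_{≤x} = λ ∫₀^x t f(t) dt` and `ρ = λ m < 1`, we have
`∫₀^∞ λ x f(x)/(1 − ρ_{≤x}) dx = ln(1/(1−ρ))`, and equivalently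
`E[S/(1−ρ_{≤S})] = ∫₀^∞ x f(x)/(1−ρ_{≤x}) dx = (1/λ) ln(1/(1−ρ))`. -/
theorem busy_period_log_identity
    (f : ℝ → ℝ) (m : ℝ)
    (hf_meas : Measurable f)
    (hf_nonneg : ∀ x, 0 ≤ f x)
    (hf_zero : ∀ x ≤ 0, f x = 0)
    (hf_prob : ∫ t in Set.Ioi (0:ℝ), f t = 1)
    (hm_int : Integrable (fun t => t * f t) (volume.restrict (Set.Ioi 0)))
    (hm_def : m = ∫ t in Set.Ioi (0:ℝ), t * f t)
    (hm_pos : 0 < m)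
    (lam : ℝ) (hlam : lam ∈ Set.Ioo 0 (1/m)) :
    (∫ x in Set.Ioi (0:ℝ), (lam * x * f x) / (1 - rhoLe f lam x)
        = Real.log (1 / (1 - lam * m)))
    ∧ (∫ x in Set.Ioi (0:ℝ), (x * f x) / (1 - rhoLe f lam x)
        = (1 / lam) * Real.log (1 / (1 - lam * m))) :=
  busy_period_log_identity_general f m hf_nonneg hm_int hm_def lam hlam
end

section
/- For every x ≥ 0 and every integer k ≥ 1, the improved SRPT-k response time bound is pointwise at most the simpler bound: I_λ(x) ≤ H_λ(x), i.e. (λ∫₀^x t²f(t)dt)/(2(1−ρ_{≤x})²) + k·ρ_{≤x}·x/(1−ρ_{≤x}) + ∫₀^x k/(1−ρ_{≤t}) dt ≤ (λ∫₀^x t²f(t)dt + λx²F̄(x))/(2(1−ρ_{≤x})²) + 2kx/(1−ρ_{≤x}). -/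
open MeasureTheory Set

/-- Tail of the service requirement distribution, `F̄(x) = ∫_x^∞ f(t) dt`. -/
noncomputable def tailS (f : ℝ → ℝ) (x : ℝ) : ℝ :=
  ∫ t in Set.Ioi x, f t

/-- The paper's simple upper bound `H_λ(x)` on the mean response time of a
size-`x` job under `k`-server SRPT. -/
noncomputable def Hbound (f : ℝ → ℝ) (k : ℕ) (lam x : ℝ) : ℝ :=
  (lam * (∫ t in (0:ℝ)..x, t ^ 2 * f t) + lam * x ^ 2 * tailS f x)
      / (2 * (1 - rhoLe f lam x) ^ 2)
    + 2 * (k : ℝ) * x / (1 - rhoLe f lam x)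

/-- The paper's improved upper bound `I_λ(x)` on the mean response time of a
size-`x` job under `k`-server SRPT. -/
noncomputable def Ibound (f : ℝ → ℝ) (k : ℕ) (lam x : ℝ) : ℝ :=
  (lam * ∫ t in (0:ℝ)..x, t ^ 2 * f t) / (2 * (1 - rhoLe f lam x) ^ 2)
    + (k : ℝ) * rhoLe f lam x * x / (1 - rhoLe f lam x)
    + ∫ t in (0:ℝ)..x, (k : ℝ) / (1 - rhoLe f lam t)

/-! Everything rests on the relevant load `ρ_{≤t}` being nondecreasing in `t` and
below `ρ < 1`. Then `I_λ(x)` and `H_λ(x)` share their waiting-time part up to the nonnegative tail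
term `λx²F̄(x)`, the factor `ρ_{≤x} ≤ 1` makes the second term of `I_λ(x)` at most `kx/(1-ρ_{≤x})`,
and bounding the integrand `k/(1-ρ_{≤t})` by its value at `t = x` makes the integral at most
`kx/(1-ρ_{≤x})` as well. -/

lemma MonotoneOn.intervalIntegral_le_mul {g : ℝ → ℝ} {a b : ℝ} (hab : a ≤ b)
    (hg : MonotoneOn g (Icc a b)) : ∫ t in a..b, g t ≤ (b - a) * g b := by
  have hint : IntervalIntegrable g volume a b := by
    apply MonotoneOn.intervalIntegrable
    rwa [uIcc_of_le hab]
  calc ∫ t in a..b, g t ≤ ∫ _ in a..b, g b :=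
        intervalIntegral.integral_mono_on hab hint intervalIntegrable_const
          fun t ht => hg ht (right_mem_Icc.2 hab) ht.2
    _ = (b - a) * g b := by rw [intervalIntegral.integral_const, smul_eq_mul]

section RelevantLoad

variable {f : ℝ → ℝ} {lam : ℝ} (hlam : 0 ≤ lam) (hf : ∀ t, 0 ≤ t → 0 ≤ f t)
  (hint : IntegrableOn (fun t => t * f t) (Ioi 0))
include hlam hf hint

lemma monotoneOn_rhoLe : MonotoneOn (rhoLe f lam) (Ici 0) := by
  intro y hy z hz hyz
  refine mul_le_mul_of_nonneg_left ?_ hlam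
  refine intervalIntegral.integral_mono_interval le_rfl hy hyz ?_ ?_
  · filter_upwards [ae_restrict_mem measurableSet_Ioc] with t ht
    exact mul_nonneg ht.1.le (hf t ht.1.le)
  · rw [intervalIntegrable_iff_integrableOn_Ioc_of_le (hy.trans hyz)]
    exact hint.mono_set Ioc_subset_Ioi_self

lemma rhoLe_le_mul_integral {y : ℝ} (hy : 0 ≤ y) :
    rhoLe f lam y ≤ lam * ∫ t in Ioi 0, t * f t := by
  refine mul_le_mul_of_nonneg_left ?_ hlam
  rw [intervalIntegral.integral_of_le hy]
  refine setIntegral_mono_set hint ?_ Ioc_subset_Ioi_self.eventuallyLE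
  filter_upwards [ae_restrict_mem measurableSet_Ioi] with t ht
  exact mul_nonneg (le_of_lt ht) (hf t (le_of_lt ht))

lemma integral_div_one_sub_rhoLe_le {c x : ℝ} (hc : 0 ≤ c) (hx : 0 ≤ x)
    (hx1 : rhoLe f lam x < 1) :
    ∫ t in (0:ℝ)..x, c / (1 - rhoLe f lam t) ≤ c * x / (1 - rhoLe f lam x) := by
  have hmono : MonotoneOn (fun t => c / (1 - rhoLe f lam t)) (Icc 0 x) := by
    intro s hs t ht hst
    have hρ := monotoneOn_rhoLe hlam hf hint hs.1 ht.1 hst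
    have hρt := (monotoneOn_rhoLe hlam hf hint ht.1 (mem_Ici.2 hx) ht.2).trans_lt hx1
    exact div_le_div_of_nonneg_left hc (by linarith) (by linarith)
  calc ∫ t in (0:ℝ)..x, c / (1 - rhoLe f lam t) ≤ (x - 0) * (c / (1 - rhoLe f lam x)) :=
        hmono.intervalIntegral_le_mul hx
    _ = c * x / (1 - rhoLe f lam x) := by ring

end RelevantLoad

lemma tailS_nonneg {f : ℝ → ℝ} (x : ℝ) (hf : ∀ t, x < t → 0 ≤ f t) : 0 ≤ tailS f x :=
  setIntegral_nonneg measurableSet_Ioi hf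

theorem Ibound_le_Hbound_general
    (f : ℝ → ℝ) (m : ℝ)
    (hf_nonneg : ∀ x, 0 ≤ f x)
    (hm_int : Integrable (fun t => t * f t) (volume.restrict (Set.Ioi 0)))
    (hm_def : m = ∫ t in Set.Ioi (0:ℝ), t * f t)
    (lam : ℝ) (hlam : lam ∈ Set.Ioo 0 (1/m))
    (x : ℝ) (hx : 0 ≤ x) (k : ℕ) :
    Ibound f k lam x ≤ Hbound f k lam x := by
  obtain ⟨hlam0, hlam1⟩ := hlam
  have hf : ∀ t, 0 ≤ t → 0 ≤ f t := fun t _ => hf_nonneg t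
  have hm : 0 < m := one_div_pos.1 (hlam0.trans hlam1)
  set r := rhoLe f lam x
  have hr1 : r < 1 := by
    calc r ≤ lam * m := hm_def ▸ rhoLe_le_mul_integral hlam0.le hf hm_int hx
      _ < 1 := (lt_div_iff₀ hm).1 hlam1
  have hJ := integral_div_one_sub_rhoLe_le hlam0.le hf hm_int (Nat.cast_nonneg k) hx hr1
  have htail : 0 ≤ lam * x ^ 2 * tailS f x / (2 * (1 - r) ^ 2) := by
    have := tailS_nonneg x fun t _ => hf_nonneg t
    have : 0 < 1 - r := by linarith
    positivity
  have hmid : (k : ℝ) * r * x / (1 - r) ≤ k * x / (1 - r) := by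
    refine div_le_div_of_nonneg_right ?_ (by linarith)
    rw [mul_right_comm]
    exact mul_le_of_le_one_right (by positivity) hr1.le
  simp only [Ibound, Hbound]
  rw [add_div, show 2 * (k : ℝ) * x / (1 - r) = k * x / (1 - r) + k * x / (1 - r) by ring]
  linarith

/-- **The improved SRPT-k response time bound is pointwise at most the
simpler bound:** `I_λ(x) ≤ H_λ(x)`. -/
theorem Ibound_le_Hbound
    (f : ℝ → ℝ) (m : ℝ)
    (hf_meas : Measurable f)
    (hf_nonneg : ∀ x, 0 ≤ f x)
    (hf_zero : ∀ x ≤ 0, f x = 0)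
    (hf_prob : ∫ t in Set.Ioi (0:ℝ), f t = 1)
    (hm_int : Integrable (fun t => t * f t) (volume.restrict (Set.Ioi 0)))
    (hm_def : m = ∫ t in Set.Ioi (0:ℝ), t * f t)
    (hm_pos : 0 < m)
    (lam : ℝ) (hlam : lam ∈ Set.Ioo 0 (1/m))
    (x : ℝ) (hx : 0 ≤ x) (k : ℕ) (hk : 1 ≤ k) :
    Ibound f k lam x ≤ Hbound f k lam x :=
  Ibound_le_Hbound_general f m hf_nonneg hm_int hm_def lam hlam x hx k
end
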